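/- Suppose there exists an [n,k,d] quasi-perfect code C over GF(q) with covering radius 2, minimum distance d with 3 <= d <= 4, and length n <= (q^{n-k}-1)/(q-1) - 2. Then there exists an [n+1,k+1,3] quasi-perfect code over GF(q) with covering radius 2. -/

import Mathlib

/-!
Let `v` be a deep hole of `C`, a word at distance exactly 2 from `C`, and let `C'` consist of the
words `(c + a • v, a)` with `c ∈ C`, `a ∈ F`. Two codewords of `C'` with equal last coordinate
differ by a nonzero word of `C`, so in at least `d ≥ 3` places; otherwise they differ in the last
place and, `v` being a deep hole, in at least two of the first `n`. If `d(v, c₀) = 2`, the word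
`(v - c₀, 1)` has weight 3. Every `(x, b)` is within distance 2 of `C'` because `x - b • v` is
within distance 2 of `C`. Finally the length bound gives `q^k (1 + (n + 1)(q - 1)) < q^n`, so by
counting some `x₀` is at distance at least 2 from `C` and outside `C + F^* v`, and then `(x₀, 0)`
is at distance at least 2 from `C'`.
-/

section Hamming

variable {ι β : Type*} [Fintype ι]

lemma hammingDist_eq_hammingNorm_sub [AddCommGroup β] [DecidableEq β] (x y : ι → β) :
    hammingDist x y = hammingNorm (x - y) := by
  rw [hammingDist_comm, hammingDist_eq_hammingNorm, neg_add_eq_sub]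

lemma hammingNorm_snoc [Zero β] [DecidableEq β] {n : ℕ} (y : Fin n → β) (a : β) :
    hammingNorm (Fin.snoc y a : Fin (n + 1) → β) = hammingNorm y + if a = 0 then 0 else 1 := by
  simp only [hammingNorm, Finset.card_filter, Fin.sum_univ_castSucc, Fin.snoc_castSucc, Fin.snoc_last]
  by_cases h : a = 0 <;> simp [h]

lemma exists_eq_pi_single_of_hammingNorm_eq_one [DecidableEq ι] [Zero β] [DecidableEq β]
    {y : ι → β} (h : hammingNorm y = 1) : ∃ i, y i ≠ 0 ∧ y = Pi.single i (y i) := by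
  obtain ⟨i, hi⟩ := Finset.card_eq_one.1 h
  have hsupp : ∀ j, y j ≠ 0 ↔ j = i := fun j => by
    simpa using congrArg (j ∈ ·) hi
  refine ⟨i, (hsupp i).2 rfl, funext fun j => ?_⟩
  by_cases hj : j = i
  · subst hj; simp
  · simpa [hj] using (hsupp j).not.2 hj

end Hamming

lemma ciSup_ciInf_eq_iff {α γ : Type*} [Finite α] [Nonempty α] [Nonempty γ]
    (f : α → γ → ℕ) (r : ℕ) :
    ⨆ x, ⨅ y, f x y = r ↔ (∀ x, ∃ y, f x y ≤ r) ∧ ∃ x, ∀ y, r ≤ f x y := by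
  constructor
  · rintro rfl
    refine ⟨fun x => ?_, ?_⟩
    · obtain ⟨y, hy⟩ := ciInf_mem (f x)
      exact ⟨y, hy.le.trans (le_ciSup (f := fun x => ⨅ y, f x y) (Set.finite_range _).bddAbove x)⟩
    · obtain ⟨x, hx⟩ := exists_eq_ciSup_of_finite (f := fun x => ⨅ y, f x y)
      exact ⟨x, fun y => hx ▸ ciInf_le (OrderBot.bddBelow _) y⟩
  · rintro ⟨hcov, x, hx⟩
    refine le_antisymm (ciSup_le fun x => ?_) ?_
    · obtain ⟨y, hy⟩ := hcov x
      exact (ciInf_le (OrderBot.bddBelow _) y).trans hy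
    · exact le_ciSup_of_le (Set.finite_range _).bddAbove x (le_ciInf hx)

section Code

variable {ι F : Type*} [Fintype ι] [Field F] [DecidableEq F]

lemma le_hammingNorm_add_smul {C : Submodule F (ι → F)} {v : ι → F} {r : ℕ}
    (hv : ∀ c ∈ C, r ≤ hammingDist v c) {c : ι → F} (hc : c ∈ C) {a : F} (ha : a ≠ 0) :
    r ≤ hammingNorm (c + a • v) :=
  calc r ≤ hammingDist v (-(a⁻¹ • c)) := hv _ (C.neg_mem (C.smul_mem _ hc))
    _ = hammingNorm (a • (v - -(a⁻¹ • c))) := by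
      rw [hammingNorm_smul fun _ => IsSMulRegular.of_ne_zero ha, hammingDist_eq_hammingNorm_sub]
    _ = hammingNorm (c + a • v) := by
      rw [sub_neg_eq_add, smul_add, smul_inv_smul₀ ha, add_comm]

lemma exists_forall_two_le_hammingDist_and_ne_add_smul [DecidableEq ι] [Fintype F]
    (C : Submodule F (ι → F)) (v : ι → F)
    (hcard : Nat.card C * (Fintype.card ι * (Fintype.card F - 1) + Fintype.card F) <
      Fintype.card F ^ Fintype.card ι) :
    ∃ x, (∀ c ∈ C, 2 ≤ hammingDist x c) ∧ ∀ c ∈ C, ∀ a : F, a ≠ 0 → x ≠ c + a • v := by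
  by_contra! hcon
  -- onto by `hcon`: `inl` reaches the words at distance 1 from `C`, `inr` the words of `C + F • v`
  let cover : C × ((ι × Fˣ) ⊕ F) → (ι → F) := fun p =>
    p.1 + p.2.elim (fun iu => Pi.single iu.1 (iu.2 : F)) (· • v)
  have hsurj : Function.Surjective cover := by
    intro x
    by_cases hfar : ∀ c ∈ C, 2 ≤ hammingDist x c
    · obtain ⟨c, hc, a, -, rfl⟩ := hcon x hfar
      exact ⟨(⟨c, hc⟩, .inr a), rfl⟩
    push Not at hfar
    obtain ⟨c, hc, hlt⟩ := hfar
    obtain h0 | h1 : hammingDist x c = 0 ∨ hammingDist x c = 1 := by omega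
    · exact ⟨(⟨c, hc⟩, .inr 0), by simp [cover, (hammingDist_eq_zero.1 h0).symm]⟩
    · rw [hammingDist_eq_hammingNorm_sub] at h1
      obtain ⟨i, hi, hsingle⟩ := exists_eq_pi_single_of_hammingNorm_eq_one h1
      refine ⟨(⟨c, hc⟩, .inl (i, Units.mk0 _ hi)), ?_⟩
      simp only [cover, Sum.elim_inl, Units.val_mk0, ← hsingle, add_sub_cancel]
  have hle := Nat.card_le_card_of_surjective cover hsurj
  rw [Nat.card_prod, Nat.card_sum, Nat.card_prod, Nat.card_units, Nat.card_fun] at hle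
  simp only [Nat.card_eq_fintype_card] at hle
  omega

end Code

section Extension

variable {F : Type*} [Field F] {n : ℕ}

def extendMap (v : Fin n → F) : ((Fin n → F) × F) →ₗ[F] (Fin (n + 1) → F) where
  toFun p := Fin.snoc (p.1 + p.2 • v) p.2
  map_add' p q := by
    ext i
    refine Fin.lastCases ?_ (fun j => ?_) i <;> simp [add_smul, add_add_add_comm]
  map_smul' a p := by
    ext i
    refine Fin.lastCases ?_ (fun j => ?_) i <;> simp [mul_add, mul_assoc]

lemma extendMap_apply (v : Fin n → F) (p : (Fin n → F) × F) :
    extendMap v p = Fin.snoc (p.1 + p.2 • v) p.2 := rfl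

lemma extendMap_injective (v : Fin n → F) : Function.Injective (extendMap v) := by
  rintro ⟨y, a⟩ ⟨z, b⟩ h
  rw [extendMap_apply, extendMap_apply, Fin.snoc_inj] at h
  obtain ⟨hyz, rfl⟩ := h
  simpa using hyz

lemma extendMap_init_sub_smul (v : Fin n → F) (x : Fin (n + 1) → F) :
    extendMap v (Fin.init x - x (Fin.last n) • v, x (Fin.last n)) = x := by
  rw [extendMap_apply, sub_add_cancel, Fin.snoc_init_self]

/-- The code `{(c + a • v, a) | c ∈ C, a ∈ F}`. If `H` is a parity-check matrix of `C`, then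
`[H | -H v]` is one of `extendCode C v`. -/
def extendCode (C : Submodule F (Fin n → F)) (v : Fin n → F) : Submodule F (Fin (n + 1) → F) :=
  LinearMap.range ((extendMap v).comp (C.subtype.prodMap LinearMap.id))

variable {C : Submodule F (Fin n → F)} {v : Fin n → F}

lemma mem_extendCode {x : Fin (n + 1) → F} :
    x ∈ extendCode C v ↔ ∃ c ∈ C, ∃ a : F, extendMap v (c, a) = x := by
  simp [extendCode]

lemma finrank_extendCode : Module.finrank F (extendCode C v) = Module.finrank F C + 1 := by
  rw [extendCode, LinearMap.finrank_range_of_inj, Module.finrank_prod, Module.finrank_self]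
  exact (extendMap_injective v).comp (C.injective_subtype.prodMap Function.injective_id)

variable [DecidableEq F]

lemma hammingNorm_extendMap (v y : Fin n → F) (a : F) :
    hammingNorm (extendMap v (y, a)) = hammingNorm (y + a • v) + if a = 0 then 0 else 1 :=
  hammingNorm_snoc _ _

lemma le_hammingDist_of_mem_extendCode {r : ℕ} (hC : ∀ c ∈ C, c ≠ 0 → r + 1 ≤ hammingNorm c)
    (hv : ∀ c ∈ C, r ≤ hammingDist v c) {x y : Fin (n + 1) → F} (hx : x ∈ extendCode C v)
    (hy : y ∈ extendCode C v) (hxy : x ≠ y) : r + 1 ≤ hammingDist x y := by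
  obtain ⟨c, hc, a, rfl⟩ := mem_extendCode.1 hx
  obtain ⟨c', hc', a', rfl⟩ := mem_extendCode.1 hy
  rw [hammingDist_eq_hammingNorm_sub, ← map_sub, Prod.mk_sub_mk, hammingNorm_extendMap]
  by_cases ha : a - a' = 0
  · have hcc' : c - c' ≠ 0 := fun h => hxy (by rw [sub_eq_zero.1 h, sub_eq_zero.1 ha])
    simpa [ha] using hC _ (C.sub_mem hc hc') hcc'
  · have hnorm := le_hammingNorm_add_smul hv (C.sub_mem hc hc') ha
    simp only [ha, if_false]
    omega

lemma exists_mem_extendCode_hammingDist_le {R : ℕ} (hC : ∀ y, ∃ c ∈ C, hammingDist y c ≤ R)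
    (x : Fin (n + 1) → F) : ∃ x' ∈ extendCode C v, hammingDist x x' ≤ R := by
  set a := x (Fin.last n)
  obtain ⟨c, hc, hdist⟩ := hC (Fin.init x - a • v)
  refine ⟨extendMap v (c, a), mem_extendCode.2 ⟨c, hc, a, rfl⟩, ?_⟩
  rwa [← extendMap_init_sub_smul v x, hammingDist_eq_hammingNorm_sub, ← map_sub, Prod.mk_sub_mk,
    sub_self, hammingNorm_extendMap, zero_smul, add_zero, if_pos rfl, add_zero,
    ← hammingDist_eq_hammingNorm_sub]

lemma le_hammingDist_extendMap_of_mem_extendCode {r : ℕ} {x : Fin n → F}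
    (h₀ : ∀ c ∈ C, r + 1 ≤ hammingDist x c)
    (h₁ : ∀ c ∈ C, ∀ a : F, a ≠ 0 → r ≤ hammingDist x (c + a • v))
    {x' : Fin (n + 1) → F} (hx' : x' ∈ extendCode C v) :
    r + 1 ≤ hammingDist (extendMap v (x, 0)) x' := by
  obtain ⟨c, hc, a, rfl⟩ := mem_extendCode.1 hx'
  rw [hammingDist_eq_hammingNorm_sub, ← map_sub, Prod.mk_sub_mk, hammingNorm_extendMap,
    zero_sub, neg_smul, ← sub_eq_add_neg, sub_sub, ← hammingDist_eq_hammingNorm_sub]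
  by_cases ha : a = 0
  · simpa [ha] using h₀ c hc
  · simpa [ha] using h₁ c hc a ha

end Extension

lemma mul_sub_one_add_lt_pow {q m n : ℕ} (hq : 1 < q) (h : n + 2 ≤ (q ^ m - 1) / (q - 1)) :
    n * (q - 1) + q < q ^ m := by
  have h' := (Nat.le_div_iff_mul_le (by omega)).1 h
  rw [add_mul] at h'
  omega

theorem stmt_3_general {F : Type*} [Field F] [Fintype F] [DecidableEq F] {n k d : ℕ}
    (C : Submodule F (Fin n → F)) (hk : Module.finrank F C = k)
    (hd : IsLeast {m : ℕ | ∃ c1 ∈ C, ∃ c2 ∈ C, c1 ≠ c2 ∧ hammingDist c1 c2 = m} d)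
    (hd3 : 3 ≤ d)
    (hR : (⨆ x : Fin n → F, ⨅ c : C, hammingDist x (c : Fin n → F)) = 2)
    (hn : n ≤ (Fintype.card F ^ (n - k) - 1) / (Fintype.card F - 1) - 2) :
    ∃ C' : Submodule F (Fin (n + 1) → F),
      Module.finrank F C' = k + 1 ∧
      IsLeast {m : ℕ | ∃ c1 ∈ C', ∃ c2 ∈ C', c1 ≠ c2 ∧ hammingDist c1 c2 = m} 3 ∧
      (⨆ x : Fin (n + 1) → F, ⨅ c : C', hammingDist x (c : Fin (n + 1) → F)) = 2 := by
  set q := Fintype.card F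
  have hq : 1 < q := Fintype.one_lt_card
  obtain ⟨hcov, v, hv⟩ := (ciSup_ciInf_eq_iff _ 2).1 hR
  have hC : ∀ c ∈ C, c ≠ 0 → 2 + 1 ≤ hammingNorm c := fun c hc h0 =>
    hd3.trans (hd.2 ⟨c, hc, 0, C.zero_mem, h0, hammingDist_zero_right c⟩)
  have hdn : d ≤ n := by
    obtain ⟨c1, -, c2, -, -, rfl⟩ := hd.1
    simpa using hammingDist_le_card_fintype (x := c1) (y := c2)
  have hkn : k ≤ n := hk ▸ C.finrank_le.trans_eq (Module.finrank_fin_fun F)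
  have hcard : Nat.card C * (Fintype.card (Fin n) * (q - 1) + q) < q ^ Fintype.card (Fin n) := by
    have hpow : q ^ n = q ^ k * q ^ (n - k) := by rw [← pow_add, Nat.add_sub_of_le hkn]
    rw [Module.natCard_eq_pow_finrank (K := F), hk, Nat.card_eq_fintype_card, Fintype.card_fin,
      hpow]
    exact Nat.mul_lt_mul_of_pos_left (mul_sub_one_add_lt_pow hq (by omega)) (by positivity)
  obtain ⟨x₀, hx₀C, hx₀v⟩ := exists_forall_two_le_hammingDist_and_ne_add_smul C v hcard
  refine ⟨extendCode C v, by rw [finrank_extendCode, hk], ⟨?_, ?_⟩,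
    (ciSup_ciInf_eq_iff _ 2).2 ⟨fun x => ?_, extendMap v (x₀, 0), fun c' => ?_⟩⟩
  · obtain ⟨c₀, hc₀⟩ := hcov v
    have h3 : hammingDist (extendMap v (-c₀, 1)) 0 = 3 := by
      rw [hammingDist_zero_right, hammingNorm_extendMap, one_smul, neg_add_eq_sub,
        ← hammingDist_eq_hammingNorm_sub, if_neg one_ne_zero, le_antisymm hc₀ (hv c₀)]
    exact ⟨_, mem_extendCode.2 ⟨_, C.neg_mem c₀.2, 1, rfl⟩, 0, zero_mem _,
      hammingDist_ne_zero.1 (by omega), h3⟩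
  · rintro _ ⟨x, hx, y, hy, hxy, rfl⟩
    exact le_hammingDist_of_mem_extendCode hC (fun c hc => hv ⟨c, hc⟩) hx hy hxy
  · obtain ⟨x', hx', hdist⟩ := exists_mem_extendCode_hammingDist_le (C := C) (v := v)
      (fun y => (hcov y).elim fun c hc => ⟨c, c.2, hc⟩) x
    exact ⟨⟨x', hx'⟩, hdist⟩
  · exact le_hammingDist_extendMap_of_mem_extendCode hx₀C
      (fun c hc a ha => hammingDist_pos.2 (hx₀v c hc a ha)) c'.2

/-- From an [n,k,d]_q quasi-perfect code with covering radius 2, 3 ≤ d ≤ 4 and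
n ≤ (q^{n-k}-1)/(q-1) - 2, one obtains an [n+1,k+1,3]_q quasi-perfect code with
covering radius 2. -/
theorem stmt_3 {F : Type*} [Field F] [Fintype F] [DecidableEq F] {n k d : ℕ}
    (C : Submodule F (Fin n → F)) (hk : Module.finrank F C = k)
    (hd : IsLeast {m : ℕ | ∃ c1 ∈ C, ∃ c2 ∈ C, c1 ≠ c2 ∧ hammingDist c1 c2 = m} d)
    (hd3 : 3 ≤ d) (hd4 : d ≤ 4)
    (hR : (⨆ x : Fin n → F, ⨅ c : C, hammingDist x (c : Fin n → F)) = 2)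
    (hn : n ≤ (Fintype.card F ^ (n - k) - 1) / (Fintype.card F - 1) - 2) :
    ∃ C' : Submodule F (Fin (n + 1) → F),
      Module.finrank F C' = k + 1 ∧
      IsLeast {m : ℕ | ∃ c1 ∈ C', ∃ c2 ∈ C', c1 ≠ c2 ∧ hammingDist c1 c2 = m} 3 ∧
      (⨆ x : Fin (n + 1) → F, ⨅ c : C', hammingDist x (c : Fin (n + 1) → F)) = 2 :=
  stmt_3_general C hk hd hd3 hR hn
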